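/- Let S(t) be a C⁰ contraction semigroup on a Hilbert space H and define H_u = {U ∈ H : ‖S(t)U‖ = ‖U‖ = ‖S*(t)U‖ for all t ≥ 0}. Then H_u is a closed linear subspace of H invariant under every S(t). -/

import Mathlib

/-! For a contraction `T`, `‖T x‖ = ‖x‖` forces `T* T x = x` (the defect `‖T* T x - x‖²` equals
`‖T* T x‖² - ‖x‖² ≤ 0`), and likewise `‖T* x‖ = ‖x‖` forces `T T* x = x`. So `H_u` is the
intersection over `t ≥ 0` of the closed subspaces `ker (S*(t) S(t) - 1) ∩ ker (S(t) S*(t) - 1)`.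
Invariance: `S(s) S(t) U = S(s + t) U`, and since the `S*(t)` commute,
`‖S(t) U‖ = ‖S*(s) U‖ = ‖S*(s) S*(t) S(t) U‖ = ‖S*(t) S*(s) S(t) U‖ ≤ ‖S*(s) S(t) U‖`. -/

open ContinuousLinearMap
open scoped InnerProductSpace

namespace ContinuousLinearMap

variable {𝕜 H : Type*} [RCLike 𝕜] [NormedAddCommGroup H] [InnerProductSpace 𝕜 H]
  {T : H →L[𝕜] H}

lemma norm_apply_le_of_norm_le_one (hT : ‖T‖ ≤ 1) (x : H) : ‖T x‖ ≤ ‖x‖ := by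
  simpa using T.le_of_opNorm_le hT x

variable [CompleteSpace H]

lemma norm_adjoint_apply_le_of_norm_le_one (hT : ‖T‖ ≤ 1) (x : H) :
    ‖adjoint T x‖ ≤ ‖x‖ :=
  norm_apply_le_of_norm_le_one (by rwa [adjoint.norm_map]) x

lemma adjoint_apply_apply_eq_of_norm_apply_eq (hT : ‖T‖ ≤ 1) {x : H}
    (hx : ‖T x‖ = ‖x‖) :
    adjoint T (T x) = x := by
  have hle : ‖adjoint T (T x)‖ ≤ ‖x‖ := hx ▸ norm_adjoint_apply_le_of_norm_le_one hT (T x)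
  have hinner : RCLike.re ⟪adjoint T (T x), x⟫_𝕜 = ‖x‖ ^ 2 := by
    rw [adjoint_inner_left, inner_self_eq_norm_sq, hx]
  have hsq : ‖adjoint T (T x) - x‖ ^ 2 ≤ 0 := by
    rw [norm_sub_sq (𝕜 := 𝕜), hinner]
    nlinarith [norm_nonneg (adjoint T (T x))]
  exact sub_eq_zero.mp (norm_eq_zero.mp (by nlinarith [norm_nonneg (adjoint T (T x) - x)]))

lemma norm_apply_eq_iff_adjoint_apply_apply_eq (hT : ‖T‖ ≤ 1) {x : H} :
    ‖T x‖ = ‖x‖ ↔ adjoint T (T x) = x := by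
  refine ⟨adjoint_apply_apply_eq_of_norm_apply_eq hT, fun hx => ?_⟩
  refine le_antisymm (norm_apply_le_of_norm_le_one hT x) ?_
  calc ‖x‖ = ‖adjoint T (T x)‖ := by rw [hx]
    _ ≤ ‖T x‖ := norm_adjoint_apply_le_of_norm_le_one hT (T x)

lemma norm_adjoint_apply_eq_iff_apply_adjoint_apply_eq (hT : ‖T‖ ≤ 1) {x : H} :
    ‖adjoint T x‖ = ‖x‖ ↔ T (adjoint T x) = x := by
  simpa only [adjoint_adjoint] using
    norm_apply_eq_iff_adjoint_apply_apply_eq (T := adjoint T) (by rwa [adjoint.norm_map])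

variable (T) in
/-- For a contraction, the vectors on which `T` and `T*` both act isometrically, written as
common fixed points of `T* T` and `T T*` so that it is visibly a closed subspace. -/
noncomputable def isometricSubmodule : Submodule 𝕜 H :=
  (adjoint T ∘L T - 1).ker ⊓ (T ∘L adjoint T - 1).ker

lemma mem_isometricSubmodule_iff (hT : ‖T‖ ≤ 1) {x : H} :
    x ∈ isometricSubmodule T ↔ ‖T x‖ = ‖x‖ ∧ ‖adjoint T x‖ = ‖x‖ := by
  rw [norm_apply_eq_iff_adjoint_apply_apply_eq hT,
    norm_adjoint_apply_eq_iff_apply_adjoint_apply_eq hT]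
  simp [isometricSubmodule, sub_eq_zero]

lemma isClosed_isometricSubmodule (T : H →L[𝕜] H) : IsClosed (isometricSubmodule T : Set H) :=
  (isClosed_ker _).inter (isClosed_ker _)

lemma norm_adjoint_apply_apply_eq_of_commute {A B : H →L[𝕜] H} (hA : ‖A‖ ≤ 1)
    (hB : ‖B‖ ≤ 1) (hAB : A ∘L B = B ∘L A) {x : H} (hBx : ‖B x‖ = ‖x‖)
    (hAx : ‖adjoint A x‖ = ‖x‖) :
    ‖adjoint A (B x)‖ = ‖B x‖ := by
  have hadj : adjoint A ∘L adjoint B = adjoint B ∘L adjoint A := by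
    rw [← adjoint_comp, ← adjoint_comp, hAB]
  refine le_antisymm (norm_adjoint_apply_le_of_norm_le_one hA _) ?_
  calc ‖B x‖ = ‖adjoint A (adjoint B (B x))‖ := by
        rw [adjoint_apply_apply_eq_of_norm_apply_eq hB hBx, hAx, hBx]
    _ = ‖adjoint B (adjoint A (B x))‖ := by rw [← comp_apply, hadj, comp_apply]
    _ ≤ ‖adjoint A (B x)‖ := norm_adjoint_apply_le_of_norm_le_one hB _

end ContinuousLinearMap

theorem isometric_subspace_closed_invariant_general
    {H : Type*} [NormedAddCommGroup H] [InnerProductSpace ℝ H] [CompleteSpace H]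
    (S : ℝ → H →L[ℝ] H)
    (hSsem : ∀ s t : ℝ, 0 ≤ s → 0 ≤ t → S (s + t) = S s ∘L S t)
    (hScontr : ∀ t : ℝ, 0 ≤ t → ‖S t‖ ≤ 1) :
    let Hu : Set H := {U | ∀ t : ℝ, 0 ≤ t →
      ‖S t U‖ = ‖U‖ ∧ ‖ContinuousLinearMap.adjoint (S t) U‖ = ‖U‖}
    (0 : H) ∈ Hu ∧
    (∀ U V, U ∈ Hu → V ∈ Hu → U + V ∈ Hu) ∧
    (∀ (c : ℝ) U, U ∈ Hu → c • U ∈ Hu) ∧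
    IsClosed Hu ∧
    (∀ t : ℝ, 0 ≤ t → ∀ U ∈ Hu, S t U ∈ Hu) := by
  intro Hu
  have hHu : Hu = ↑(⨅ (t : ℝ) (_ : 0 ≤ t), isometricSubmodule (S t)) := by
    ext U
    simp only [Hu, Set.mem_ofPred_eq, SetLike.mem_coe, Submodule.mem_iInf]
    exact forall₂_congr fun t ht => (mem_isometricSubmodule_iff (hScontr t ht)).symm
  refine ⟨hHu ▸ zero_mem _, fun U V => hHu ▸ add_mem,
    fun c U => hHu ▸ Submodule.smul_mem _ c, ?_, ?_⟩
  · rw [hHu, Submodule.coe_iInf]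
    exact isClosed_iInter fun t => by
      rw [Submodule.coe_iInf]
      exact isClosed_iInter fun _ => isClosed_isometricSubmodule (S t)
  · intro t ht U hU s hs
    have hcomm : S s ∘L S t = S t ∘L S s := by
      rw [← hSsem s t hs ht, ← hSsem t s ht hs, add_comm]
    refine ⟨?_, norm_adjoint_apply_apply_eq_of_commute (hScontr s hs) (hScontr t ht) hcomm
      (hU t ht).1 (hU s hs).2⟩
    rw [← comp_apply, ← hSsem s t hs ht, (hU _ (add_nonneg hs ht)).1, (hU t ht).1]

theorem isometric_subspace_closed_invariant
    {H : Type*} [NormedAddCommGroup H] [InnerProductSpace ℝ H] [CompleteSpace H]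
    (S : ℝ → H →L[ℝ] H)
    (hS0 : S 0 = 1)
    (hSsem : ∀ s t : ℝ, 0 ≤ s → 0 ≤ t → S (s + t) = S s ∘L S t)
    (hScontr : ∀ t : ℝ, 0 ≤ t → ‖S t‖ ≤ 1) :
    let Hu : Set H := {U | ∀ t : ℝ, 0 ≤ t →
      ‖S t U‖ = ‖U‖ ∧ ‖ContinuousLinearMap.adjoint (S t) U‖ = ‖U‖}
    (0 : H) ∈ Hu ∧
    (∀ U V, U ∈ Hu → V ∈ Hu → U + V ∈ Hu) ∧
    (∀ (c : ℝ) U, U ∈ Hu → c • U ∈ Hu) ∧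
    IsClosed Hu ∧
    (∀ t : ℝ, 0 ≤ t → ∀ U ∈ Hu, S t U ∈ Hu) :=
  isometric_subspace_closed_invariant_general S hSsem hScontr
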